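/- arXiv:1810.10637 — 4 statements merged into one kernel-verified Lean document; each statement's English description precedes it below -/
import Mathlib

section
/- Let W₀ ⊆ ℝ^d be a compact set whose linear span is all of ℝ^d. Then W₀ admits a barycentric spanner: there exist x₁, …, x_d ∈ W₀ such that every x ∈ W₀ can be written as x = Σ_{i=1}^d c_i x_i with coefficients c_i ∈ [−1, 1]. -/
/-! Among all `d`-tuples of points of `W₀`, choose one maximising the absolute value of the
determinant; it exists by compactness and is nonzero because `W₀` spans. By Cramer's rule the
`k`-th coordinate of `y ∈ W₀` in this basis is the ratio of the determinants of the tuple with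
its `k`-th entry replaced by `y` and of the tuple itself, so maximality bounds it by `1`. -/

open Set Submodule

variable {K E ι : Type*}

section Barycentric

variable (K) [Field K] [LinearOrder K] [AddCommGroup E] [Module K E] [Fintype ι]

def IsBarycentricSpanner (W : Set E) (x : ι → E) : Prop :=
  (∀ i, x i ∈ W) ∧ ∀ y ∈ W, ∃ c : ι → K, (∀ i, c i ∈ Icc (-1 : K) 1) ∧ y = ∑ i, c i • x i

variable {K} [IsStrictOrderedRing K] [DecidableEq ι]

theorem isBarycentricSpanner_of_isMaxOn_abs_det (b : Module.Basis ι K E) {W : Set E}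
    {x : ι → E} (hxW : x ∈ univ.pi fun _ => W)
    (hmax : IsMaxOn (fun v => |b.det v|) (univ.pi fun _ => W) x) (hx : b.det x ≠ 0) :
    IsBarycentricSpanner K W x := by
  obtain ⟨hli, hsp⟩ := b.is_basis_iff_det.mpr (isUnit_iff_ne_zero.mpr hx)
  set bx := Module.Basis.mk hli hsp.ge
  refine ⟨fun i => hxW i (mem_univ i), fun y hy => ⟨bx.repr y, fun k => ?_, ?_⟩⟩
  · have hcramer : b.det x * bx.repr y k = b.det (Function.update x k y) := by
      simpa [bx] using LinearMap.congr_fun (b.det_smul_mk_coord_eq_det_update hli hsp.ge k) y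
    have hle : |b.det (Function.update x k y)| ≤ |b.det x| :=
      hmax fun i _ => by
        rcases eq_or_ne i k with rfl | hik
        · simpa using hy
        · simpa [hik] using hxW i (mem_univ i)
    rw [← hcramer, abs_mul] at hle
    exact abs_le.mp (le_of_mul_le_mul_left (by simpa using hle) (abs_pos.mpr hx))
  · conv_lhs => rw [← bx.sum_repr y]
    simp [bx]

end Barycentric

theorem Module.Basis.exists_det_ne_zero_of_span_eq_top [Field K] [AddCommGroup E] [Module K E]
    [Fintype ι] [DecidableEq ι] (b : Module.Basis ι K E) {W : Set E} (hW : span K W = ⊤) :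
    ∃ v : ι → E, (∀ i, v i ∈ W) ∧ b.det v ≠ 0 := by
  obtain ⟨s, hsW, hspan, hli⟩ := exists_linearIndependent K W
  let bs : Module.Basis s K E :=
    Module.Basis.mk hli (by rw [Subtype.range_coe, hspan, hW])
  refine ⟨bs.reindex (bs.indexEquiv b), fun i => ?_, (b.isUnit_det _).ne_zero⟩
  simpa [bs] using hsW ((bs.indexEquiv b).symm i).2

theorem Module.Basis.continuous_det {𝕜 : Type*} [NontriviallyNormedField 𝕜] [CompleteSpace 𝕜]
    [AddCommGroup E] [Module 𝕜 E] [TopologicalSpace E] [IsTopologicalAddGroup E]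
    [ContinuousSMul 𝕜 E] [T2Space E] [FiniteDimensional 𝕜 E] [Fintype ι] [DecidableEq ι]
    (b : Module.Basis ι 𝕜 E) : Continuous b.det := by
  simp_rw [funext b.det_apply]
  refine Continuous.matrix_det (continuous_pi fun i => continuous_pi fun j => ?_)
  exact (b.coord i).continuous_of_finiteDimensional.comp (continuous_apply j)

theorem exists_isBarycentricSpanner [AddCommGroup E] [Module ℝ E] [TopologicalSpace E]
    [IsTopologicalAddGroup E] [ContinuousSMul ℝ E] [T2Space E] [FiniteDimensional ℝ E]
    [Fintype ι] (b : Module.Basis ι ℝ E) {W : Set E} (hWc : IsCompact W)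
    (hW : span ℝ W = ⊤) : ∃ x : ι → E, IsBarycentricSpanner ℝ W x := by
  classical
  obtain ⟨v, hvW, hv⟩ := b.exists_det_ne_zero_of_span_eq_top hW
  obtain ⟨x, hxW, hmax⟩ := (isCompact_univ_pi fun _ => hWc).exists_isMaxOn
    ⟨v, fun i _ => hvW i⟩ (continuous_abs.comp b.continuous_det).continuousOn
  have hx : b.det x ≠ 0 := by
    have hle : |b.det v| ≤ |b.det x| := hmax fun i _ => hvW i
    exact abs_pos.mp ((abs_pos.mpr hv).trans_le hle)
  exact ⟨x, isBarycentricSpanner_of_isMaxOn_abs_det b hxW hmax hx⟩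

/-- **Existence of a barycentric spanner** (Awerbuch–Kleinberg, Proposition 3.1, existence part).
If `W₀ ⊆ ℝ^d` is compact and its linear span is all of `ℝ^d`, then there exist
`x₁, …, x_d ∈ W₀` such that every `x ∈ W₀` is a linear combination of the `xᵢ`
with coefficients in `[-1, 1]`. -/
theorem barycentric_spanner_exists (d : ℕ)
    (W₀ : Set (EuclideanSpace ℝ (Fin d)))
    (hcompact : IsCompact W₀)
    (hspan : Submodule.span ℝ W₀ = ⊤) :
    ∃ x : Fin d → EuclideanSpace ℝ (Fin d),
      (∀ i, x i ∈ W₀) ∧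
      ∀ y ∈ W₀, ∃ c : Fin d → ℝ,
        (∀ i, c i ∈ Set.Icc (-1 : ℝ) 1) ∧ y = ∑ i, c i • x i :=
  exists_isBarycentricSpanner (EuclideanSpace.basisFun (Fin d) ℝ).toBasis hcompact hspan
end

section
/- Let A ⊆ {0,1}^d be a finite set of paths with |A| ≥ 2, let μ, μ̂ ∈ ℝ^d and Δ̃ ≥ 0 satisfy |⟨a, μ − μ̂⟩| ≤ Δ̃ for every a ∈ A, let a* be the unique minimizer of ⟨a, μ⟩ over A, and suppose 4Δ̃ < Δ_min where Δ_min = min_{a≠a*}⟨a − a*, μ⟩. Then the minimizer ã of ⟨a, μ̂⟩ over A is unique and equals a*, and the estimated second shortest path ā (a minimizer of ⟨a, μ̂⟩ over A \ {ã}) satisfies ⟨ā, μ̂⟩ − ⟨ã, μ̂⟩ > 2Δ̃; i.e., the Top-Two Comparison criterion fires and all sub-optimal paths are eliminated simultaneously. -/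
open Matrix

/-- **The Top-Two Comparison criterion fires once the confidence radius is small**
(elimination-time claim underlying Theorem 5.2).  On the confidence event, if
`4Δ̃ < Δ_min`, then the minimizer `ã` of the estimated delay is unique and equal to the
unique optimal path `a*`, and the estimated second shortest path `ā` satisfies
`⟨ā, μ̂⟩ − ⟨ã, μ̂⟩ > 2Δ̃`: all sub-optimal paths are eliminated simultaneously. -/
theorem ttc_criterion_fires (d : ℕ) (A : Finset (Fin d → ℝ))
    (hA01 : ∀ a ∈ A, ∀ j, a j = 0 ∨ a j = 1) (hA2 : 2 ≤ A.card)
    (μ μhat : Fin d → ℝ) (Δ : ℝ) (hΔ : 0 ≤ Δ)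
    (hconf : ∀ a ∈ A, |a ⬝ᵥ (μ - μhat)| ≤ Δ)
    (astar : Fin d → ℝ) (hastarA : astar ∈ A)
    (hopt : ∀ a ∈ A, a ≠ astar → (astar ⬝ᵥ μ) < (a ⬝ᵥ μ))
    (Δmin : ℝ) (hΔmin : ∀ a ∈ A, a ≠ astar → Δmin ≤ ((a - astar) ⬝ᵥ μ))
    (hsmall : 4 * Δ < Δmin)
    (atil : Fin d → ℝ) (hatilA : atil ∈ A)
    (hatil : ∀ a ∈ A, (atil ⬝ᵥ μhat) ≤ (a ⬝ᵥ μhat))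
    (abar : Fin d → ℝ) (habarA : abar ∈ A.erase atil)
    (habar : ∀ a ∈ A.erase atil, (abar ⬝ᵥ μhat) ≤ (a ⬝ᵥ μhat)) :
    atil = astar ∧ (abar ⬝ᵥ μhat) - (atil ⬝ᵥ μhat) > 2 * Δ := by
  have key : ∀ a ∈ A, |a ⬝ᵥ μ - a ⬝ᵥ μhat| ≤ Δ := by
    intro a ha
    have := hconf a ha
    rwa [dotProduct_sub] at this
  have hteq : atil = astar := by
    by_contra hne
    have h1 := hΔmin atil hatilA hne
    rw [sub_dotProduct] at h1
    have h2 := hatil astar hastarA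
    have h3 := key atil hatilA
    have h4 := key astar hastarA
    have h3' := abs_le.mp h3
    have h4' := abs_le.mp h4
    linarith [h3'.1, h3'.2, h4'.1, h4'.2]
  subst hteq
  refine ⟨rfl, ?_⟩
  obtain ⟨hbne, hbA⟩ := Finset.mem_erase.mp habarA
  have h1 := hΔmin abar hbA hbne
  rw [sub_dotProduct] at h1
  have h3 := abs_le.mp (key abar hbA)
  have h4 := abs_le.mp (key atil hatilA)
  linarith [h3.1, h3.2, h4.1, h4.2]
end

section
/- Let A ⊆ {0,1}^d be a finite set of paths with |A| ≥ 2, let μ, μ̂ ∈ ℝ^d and Δ̃ ≥ 0 satisfy |⟨a, μ − μ̂⟩| ≤ Δ̃ for every a ∈ A, let a* be the unique minimizer of ⟨a, μ⟩ over A, let ã be a minimizer of ⟨a, μ̂⟩ over A and ā a minimizer of ⟨a, μ̂⟩ over A \ {ã}. If ⟨ā, μ̂⟩ − ⟨ã, μ̂⟩ ≤ 2Δ̃ (the elimination criterion does not fire), then the minimum gap satisfies Δ_min ≤ 4Δ̃. -/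
open Matrix

/-- **If the Top-Two Comparison criterion does not fire, the minimum gap is small**
(gap-detection step used by the Modified Top-Two Comparison algorithm, Theorem 5.3).
On the confidence event, with `ã` a minimizer of the estimated delay over `A` and `ā`
a minimizer over `A \ {ã}`, if `⟨ā, μ̂⟩ − ⟨ã, μ̂⟩ ≤ 2Δ̃` then `Δ_min ≤ 4Δ̃`. -/
theorem criterion_not_firing_implies_small_gap (d : ℕ) (A : Finset (Fin d → ℝ))
    (hA01 : ∀ a ∈ A, ∀ j, a j = 0 ∨ a j = 1) (hA2 : 2 ≤ A.card)
    (μ μhat : Fin d → ℝ) (Δ : ℝ) (hΔ : 0 ≤ Δ)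
    (hconf : ∀ a ∈ A, |a ⬝ᵥ (μ - μhat)| ≤ Δ)
    (astar : Fin d → ℝ) (hastarA : astar ∈ A)
    (hopt : ∀ a ∈ A, a ≠ astar → (astar ⬝ᵥ μ) < (a ⬝ᵥ μ))
    (Δmin : ℝ) (hΔmin : ∀ a ∈ A, a ≠ astar → Δmin ≤ ((a - astar) ⬝ᵥ μ))
    (atil : Fin d → ℝ) (hatilA : atil ∈ A)
    (hatil : ∀ a ∈ A, (atil ⬝ᵥ μhat) ≤ (a ⬝ᵥ μhat))
    (abar : Fin d → ℝ) (habarA : abar ∈ A.erase atil)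
    (habar : ∀ a ∈ A.erase atil, (abar ⬝ᵥ μhat) ≤ (a ⬝ᵥ μhat))
    (hnofire : (abar ⬝ᵥ μhat) - (atil ⬝ᵥ μhat) ≤ 2 * Δ) :
    Δmin ≤ 4 * Δ := by
  have key : ∀ a ∈ A, a ⬝ᵥ μ - a ⬝ᵥ μhat ≤ Δ ∧ a ⬝ᵥ μhat - a ⬝ᵥ μ ≤ Δ := by
    intro a ha
    have h := hconf a ha
    rw [dotProduct_sub] at h
    constructor
    · linarith [abs_le.mp h |>.2]
    · linarith [abs_le.mp h |>.1]
  by_cases hcase : atil = astar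
  · -- abar ≠ astar
    subst hcase
    have habarA' : abar ∈ A := Finset.mem_of_mem_erase habarA
    have hne : abar ≠ atil := Finset.ne_of_mem_erase habarA
    have h1 := hΔmin abar habarA' hne
    rw [sub_dotProduct] at h1
    have h2 := key abar habarA'
    have h3 := key atil hatilA
    linarith [h2.1, h3.2]
  · have h1 := hΔmin atil hatilA hcase
    rw [sub_dotProduct] at h1
    have h2 := key atil hatilA
    have h3 := key astar hastarA
    have h4 := hatil astar hastarA
    linarith [h2.1, h3.2]
end

section
/- Let A ⊆ {0,1}^d be a finite set with |A| ≥ 2 whose elements have pairwise incomparable supports (for all distinct a, a' ∈ A there is j with a'_j = 1 and a_j = 0), let ψ ∈ ℝ^d, let a* be a minimizer of ⟨a, ψ⟩ over A, and let M ∈ ℝ satisfy ⟨a, ψ⟩ − ψ_j + M > ⟨a', ψ⟩ for all a, a' ∈ A and all j with a_j = 1. For j with a*_j = 1, let ψ'_j be ψ with its j-th coordinate replaced by M. Then min over j with a*_j = 1 of min_{a ∈ A} ⟨a, ψ'_j⟩ equals min_{a ∈ A \ {a*}} ⟨a, ψ⟩; i.e., the Second Shortest Path sub-routine correctly computes the second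 shortest delay. -/
open Matrix

lemma dot_update {d : ℕ} (a ψ : Fin d → ℝ) (j : Fin d) (M : ℝ) :
    a ⬝ᵥ Function.update ψ j M = a ⬝ᵥ ψ + a j * (M - ψ j) := by
  have h : Function.update ψ j M = ψ + Pi.single j (M - ψ j) := by
    ext i
    by_cases h : i = j
    · subst h; simp
    · simp [Function.update_of_ne h, Pi.single_apply, h]
  rw [h, dotProduct_add, dotProduct_single]

/-- **Correctness of the Second Shortest Path sub-routine** (Section 5.2, Algorithm 2).
`A ⊆ {0,1}^d` is a finite set of paths (with pairwise incomparable supports, as holds for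
distinct simple source–destination paths), `a*` minimizes the delay `⟨·, ψ⟩` over `A`,
and `M` is large enough that perturbing any used link to delay `M` makes the perturbed
path longer than every path.  Then the minimum, over links `j` used by `a*`, of the
shortest path delay under the perturbed delays `ψ'_j = update ψ j M` equals the second
shortest delay `min_{a ∈ A \ {a*}} ⟨a, ψ⟩`. -/
theorem second_shortest_path_correct (d : ℕ) (A : Finset (Fin d → ℝ))
    (hA01 : ∀ a ∈ A, ∀ j, a j = 0 ∨ a j = 1) (hA2 : 2 ≤ A.card)
    (hincomp : ∀ a ∈ A, ∀ a' ∈ A, a ≠ a' → ∃ j, a' j = 1 ∧ a j = 0)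
    (ψ : Fin d → ℝ)
    (astar : Fin d → ℝ) (hastarA : astar ∈ A)
    (hopt : ∀ a ∈ A, (astar ⬝ᵥ ψ) ≤ (a ⬝ᵥ ψ))
    (M : ℝ)
    (hM : ∀ a ∈ A, ∀ a' ∈ A, ∀ j : Fin d, a j = 1 → (a' ⬝ᵥ ψ) < (a ⬝ᵥ ψ) - ψ j + M)
    (hA : A.Nonempty)
    (hJ : (Finset.univ.filter fun j : Fin d => astar j = 1).Nonempty)
    (herase : (A.erase astar).Nonempty) :
    (Finset.univ.filter fun j : Fin d => astar j = 1).inf' hJ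
        (fun j => A.inf' hA fun a => a ⬝ᵥ Function.update ψ j M)
      = (A.erase astar).inf' herase fun a => a ⬝ᵥ ψ := by
  obtain ⟨a', ha', ha'eq⟩ := Finset.exists_mem_eq_inf' herase (fun a => a ⬝ᵥ ψ)
  have ha'A : a' ∈ A := Finset.mem_of_mem_erase ha'
  have ha'ne : astar ≠ a' := fun h => (Finset.ne_of_mem_erase ha') h.symm
  apply le_antisymm
  · -- upper bound
    obtain ⟨j, hj1, hj0⟩ := hincomp a' ha'A astar hastarA (fun h => ha'ne h.symm)
    have hjmem : j ∈ Finset.univ.filter fun j : Fin d => astar j = 1 := by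
      simp [hj1]
    refine le_trans (Finset.inf'_le _ hjmem) ?_
    refine le_trans (Finset.inf'_le _ ha'A) ?_
    rw [dot_update, hj0, ha'eq]
    ring_nf
    exact le_refl _
  · apply Finset.le_inf'
    intro j hj
    have hjast : astar j = 1 := (Finset.mem_filter.mp hj).2
    apply Finset.le_inf'
    intro a haA
    rcases hA01 a haA j with h0 | h1
    · have hane : a ≠ astar := fun h => by rw [h, hjast] at h0; norm_num at h0
      rw [dot_update, h0, ha'eq]
      simp only [zero_mul, add_zero]
      exact ha'eq ▸ Finset.inf'_le (fun a => a ⬝ᵥ ψ) (Finset.mem_erase.mpr ⟨hane, haA⟩)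
    · rw [dot_update, h1, one_mul, ha'eq]
      have := hM a haA a' ha'A j h1
      linarith
end
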